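/- Let x, y, x', y' be strictly positive real numbers with x/y ≠ x'/y'. Then there exists a real number φ such that (sin(xφ), sin(yφ)) ≠ (sin(x'φ), sin(y'φ)); that is, two points with different coordinate ratios cannot have the same Lissajous curve. -/

import Mathlib

/-! A Lissajous curve determines its frequencies themselves, not only their ratio: the velocity of
`φ ↦ (sin (x * φ), sin (y * φ))` at `φ = 0` is `(x, y)`. -/

open Real

lemma hasDerivAt_sin_mul_zero (a : ℝ) : HasDerivAt (fun φ : ℝ => sin (a * φ)) a 0 := by
  simpa using ((hasDerivAt_id' (0 : ℝ)).const_mul a).sin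

lemma eq_of_forall_sin_mul_eq {a b : ℝ} (h : ∀ φ : ℝ, sin (a * φ) = sin (b * φ)) : a = b :=
  (hasDerivAt_sin_mul_zero a).unique (by rw [funext h]; exact hasDerivAt_sin_mul_zero b)

theorem lissajous_ne_of_ratio_ne_general (x y x' y' : ℝ)
    (hratio : x / y ≠ x' / y') :
    ∃ φ : ℝ, (Real.sin (x * φ), Real.sin (y * φ)) ≠
      (Real.sin (x' * φ), Real.sin (y' * φ)) := by
  by_contra! h
  have hx : x = x' := eq_of_forall_sin_mul_eq fun φ => (Prod.ext_iff.1 (h φ)).1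
  have hy : y = y' := eq_of_forall_sin_mul_eq fun φ => (Prod.ext_iff.1 (h φ)).2
  exact hratio (by rw [hx, hy])

theorem lissajous_ne_of_ratio_ne (x y x' y' : ℝ)
    (hx : 0 < x) (hy : 0 < y) (hx' : 0 < x') (hy' : 0 < y')
    (hratio : x / y ≠ x' / y') :
    ∃ φ : ℝ, (Real.sin (x * φ), Real.sin (y * φ)) ≠
      (Real.sin (x' * φ), Real.sin (y' * φ)) :=
  lissajous_ne_of_ratio_ne_general x y x' y' hratio
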